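/- arXiv:gr-qc/9812019 — 8 statements merged into one kernel-verified Lean document; each statement's English description precedes it below -/
import Mathlib

section
/- Let R > 0, let l ≥ 1 and m ≥ 1 be integers, and let κ, Q be real numbers. Suppose U, V, W : ℝ → ℝ are differentiable at every r ∈ (0,R) and satisfy, for all r ∈ (0,R): (i) (κ·l·(l+1)/2 − m)·U(r) = l·Q·( W(r) + (l+2)·V(r) ), and (ii) Q·( (l+2)·V'(r) + W'(r) ) = ( m + κ·(l+1)/2 )·U'(r) + m·(l+1)·U(r)/r. Then U'(r) + (l/r)·U(r) = 0 for all r ∈ (0,R), and consequently r ↦ r^l·U(r) is constant on (0,R). -/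
open Set

/-- For an axial-led hybrid mode, the two components of the curl
of the perturbed Euler equation force `U' + (l/r)·U = 0`, hence `r^l · U` is
constant on `(0,R)`. -/
theorem stmt_2 (R : ℝ) (hR : 0 < R) (l m : ℕ) (hl : 1 ≤ l) (hm : 1 ≤ m)
    (κ Q : ℝ) (U V W U' V' W' : ℝ → ℝ)
    (hU : ∀ r ∈ Ioo (0:ℝ) R, HasDerivAt U (U' r) r)
    (hV : ∀ r ∈ Ioo (0:ℝ) R, HasDerivAt V (V' r) r)
    (hW : ∀ r ∈ Ioo (0:ℝ) R, HasDerivAt W (W' r) r)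
    (h1 : ∀ r ∈ Ioo (0:ℝ) R,
      (κ * l * ((l:ℝ) + 1) / 2 - m) * U r = (l:ℝ) * Q * (W r + ((l:ℝ) + 2) * V r))
    (h2 : ∀ r ∈ Ioo (0:ℝ) R,
      Q * (((l:ℝ) + 2) * V' r + W' r)
        = ((m:ℝ) + κ * ((l:ℝ) + 1) / 2) * U' r + (m:ℝ) * ((l:ℝ) + 1) * U r / r) :
    (∀ r ∈ Ioo (0:ℝ) R, U' r + ((l:ℝ) / r) * U r = 0) ∧
    (∀ r ∈ Ioo (0:ℝ) R, ∀ s ∈ Ioo (0:ℝ) R, r ^ l * U r = s ^ l * U s) := by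
  have hml : (0:ℝ) < (m:ℝ) * ((l:ℝ) + 1) := by positivity
  have key : ∀ r ∈ Ioo (0:ℝ) R, U' r + ((l:ℝ) / r) * U r = 0 := by
    intro r hr
    have hr0 : (0:ℝ) < r := hr.1
    -- derivative of lhs of h1
    have hL : HasDerivAt (fun x => (κ * l * ((l:ℝ) + 1) / 2 - m) * U x)
        ((κ * l * ((l:ℝ) + 1) / 2 - m) * U' r) r := (hU r hr).const_mul _
    have hRd : HasDerivAt (fun x => (l:ℝ) * Q * (W x + ((l:ℝ) + 2) * V x))
        ((l:ℝ) * Q * (W' r + ((l:ℝ) + 2) * V' r)) r :=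
      (((hW r hr).add ((hV r hr).const_mul _))).const_mul _
    have heq : (fun x => (κ * l * ((l:ℝ) + 1) / 2 - m) * U x)
        =ᶠ[nhds r] (fun x => (l:ℝ) * Q * (W x + ((l:ℝ) + 2) * V x)) := by
      filter_upwards [isOpen_Ioo.mem_nhds hr] with x hx using h1 x hx
    have hL' : HasDerivAt (fun x => (l:ℝ) * Q * (W x + ((l:ℝ) + 2) * V x))
        ((κ * l * ((l:ℝ) + 1) / 2 - m) * U' r) r := hL.congr_of_eventuallyEq heq.symm
    have hder : (κ * l * ((l:ℝ) + 1) / 2 - m) * U' r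
        = (l:ℝ) * Q * (W' r + ((l:ℝ) + 2) * V' r) := hL'.unique hRd
    have h2' := h2 r hr
    have h3 : (κ * l * ((l:ℝ) + 1) / 2 - m) * U' r
        = (l:ℝ) * (((m:ℝ) + κ * ((l:ℝ) + 1) / 2) * U' r + (m:ℝ) * ((l:ℝ) + 1) * U r / r) := by
      rw [hder, ← h2']; ring
    have h4 : (m:ℝ) * ((l:ℝ) + 1) * (U' r * r + (l:ℝ) * U r) = 0 := by
      field_simp at h3
      linarith [h3]
    have h5 : U' r * r + (l:ℝ) * U r = 0 := by
      rcases mul_eq_zero.mp h4 with h | h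
      · exact absurd h (ne_of_gt hml)
      · exact h
    field_simp
    linarith [h5]
  refine ⟨key, ?_⟩
  intro r hr s hs
  have hconv : Convex ℝ (Ioo (0:ℝ) R) := convex_Ioo _ _
  have hd : ∀ x ∈ Ioo (0:ℝ) R, HasDerivAt (fun y => y ^ l * U y) 0 x := by
    intro x hx
    have hx0 : (0:ℝ) < x := hx.1
    have h := ((hasDerivAt_pow l x).mul (hU x hx))
    have : (↑l * x ^ (l - 1) * U x + x ^ l * U' x) = 0 := by
      have hk := key x hx
      have hxl : x ^ l = x ^ (l - 1) * x := by
        rw [← pow_succ]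
        congr 1
        omega
      rw [hxl]
      have : U' x + ((l:ℝ) / x) * U x = 0 := hk
      have hUx : U' x = -((l:ℝ) / x) * U x := by linarith
      rw [hUx]
      field_simp
      ring
    rw [this] at h
    exact h
  have hdiff : DifferentiableOn ℝ (fun y => y ^ l * U y) (Ioo (0:ℝ) R) :=
    fun x hx => ((hd x hx).differentiableAt).differentiableWithinAt
  have hfd : ∀ x ∈ Ioo (0:ℝ) R, fderivWithin ℝ (fun y => y ^ l * U y) (Ioo (0:ℝ) R) x = 0 := by
    intro x hx
    have := ((hd x hx).hasFDerivAt).hasFDerivWithinAt.fderivWithin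
      (isOpen_Ioo.uniqueDiffWithinAt hx)
    rw [this]
    ext y
    simp
  exact hconv.is_const_of_fderivWithin_eq_zero hdiff hfd hr hs
end

section
/- Let R > 0, let l ≥ 1 and m ≥ 1 be integers, and let κ, Q be real numbers. Suppose U, V, W : ℝ → ℝ are differentiable at every r ∈ (0,R) and satisfy, for all r ∈ (0,R): (i) (κ·l·(l+1)/2 − m)·U(r) = l·Q·( W(r) + (l+2)·V(r) ), and (ii) Q·( (l+2)·V'(r) + W'(r) ) = ( m + κ·(l+1)/2 )·U'(r) + m·(l+1)·U(r)/r. If in addition U(r) tends to a finite limit as r → 0⁺ (regularity at the center of the star), then U(r) = 0 for all r ∈ (0,R). -/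
open Set Filter Topology

/-! Differentiating (i) and comparing with `l` times (ii), the `V`, `W` terms cancel and the
`κ` terms cancel, leaving the Euler equation `r U' + l U = 0`. Hence `r ^ l U` is constant on
`(0,R)`; since `U` has a finite limit at `0⁺` and `l ≥ 1`, that constant is `0`. -/

lemma hasDerivAt_pow_mul_zero_of_mul_deriv_eq {U : ℝ → ℝ} {u r : ℝ} (n : ℕ) (hr : r ≠ 0)
    (hU : HasDerivAt U u r) (heuler : u * r = -n * U r) :
    HasDerivAt (fun x => x ^ n * U x) 0 r := by
  refine ((hasDerivAt_pow n r).mul hU).congr_deriv ((mul_left_inj' hr).mp ?_)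
  rcases n with _ | n
  · simp_all
  · push_cast at heuler ⊢
    linear_combination r ^ (n + 1) * heuler

theorem eqOn_zero_of_mul_deriv_eq_of_tendsto {U U' : ℝ → ℝ} {R L : ℝ} {n : ℕ} (hn : n ≠ 0)
    (hU : ∀ r ∈ Ioo 0 R, HasDerivAt U (U' r) r)
    (heuler : ∀ r ∈ Ioo 0 R, U' r * r = -n * U r)
    (hL : Tendsto U (𝓝[>] 0) (𝓝 L)) :
    ∀ r ∈ Ioo 0 R, U r = 0 := by
  intro r hr
  set g : ℝ → ℝ := fun x => x ^ n * U x
  have hg : ∀ x ∈ Ioo 0 R, HasDerivAt g 0 x := fun x hx =>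
    hasDerivAt_pow_mul_zero_of_mul_deriv_eq n hx.1.ne' (hU x hx) (heuler x hx)
  have hconst : ∀ x ∈ Ioo 0 R, g x = g r := fun x hx =>
    isOpen_Ioo.is_const_of_deriv_eq_zero isPreconnected_Ioo
      (fun y hy => (hg y hy).differentiableAt.differentiableWithinAt)
      (fun y hy => (hg y hy).deriv) hx hr
  have hg_const : Tendsto g (𝓝[>] 0) (𝓝 (g r)) :=
    tendsto_const_nhds.congr' <| by
      filter_upwards [Ioo_mem_nhdsGT (hr.1.trans hr.2)] with x hx using (hconst x hx).symm
  have hg_zero : Tendsto g (𝓝[>] 0) (𝓝 0) := by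
    have hpow : Tendsto (fun x : ℝ => x ^ n) (𝓝[>] 0) (𝓝 0) := by
      simpa [zero_pow hn] using ((continuous_pow n).tendsto (0 : ℝ)).mono_left nhdsWithin_le_nhds
    simpa using hpow.mul hL
  have : r ^ n * U r = 0 := tendsto_nhds_unique hg_const hg_zero
  exact (mul_eq_zero.mp this).resolve_left (pow_ne_zero n hr.1.ne')

lemma mul_deriv_eq_of_curl_equations {l m κ Q U u v w r : ℝ} (hm : m ≠ 0) (hl : l + 1 ≠ 0)
    (hr : r ≠ 0) (h1 : (κ * l * (l + 1) / 2 - m) * u = l * Q * (w + (l + 2) * v))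
    (h2 : Q * ((l + 2) * v + w) = (m + κ * (l + 1) / 2) * u + m * (l + 1) * U / r) :
    u * r = -l * U := by
  have hml : m * (l + 1) ≠ 0 := mul_ne_zero hm hl
  field_simp at h2
  refine (mul_right_inj' hml).mp ?_
  linear_combination -r * h1 - l / 2 * h2

theorem stmt_3_general (R : ℝ) (l m : ℕ) (hl : 1 ≤ l) (hm : 1 ≤ m)
    (κ Q : ℝ) (U V W U' V' W' : ℝ → ℝ)
    (hU : ∀ r ∈ Ioo (0:ℝ) R, HasDerivAt U (U' r) r)
    (hV : ∀ r ∈ Ioo (0:ℝ) R, HasDerivAt V (V' r) r)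
    (hW : ∀ r ∈ Ioo (0:ℝ) R, HasDerivAt W (W' r) r)
    (h1 : ∀ r ∈ Ioo (0:ℝ) R,
      (κ * l * ((l:ℝ) + 1) / 2 - m) * U r = (l:ℝ) * Q * (W r + ((l:ℝ) + 2) * V r))
    (h2 : ∀ r ∈ Ioo (0:ℝ) R,
      Q * (((l:ℝ) + 2) * V' r + W' r)
        = ((m:ℝ) + κ * ((l:ℝ) + 1) / 2) * U' r + (m:ℝ) * ((l:ℝ) + 1) * U r / r)
    (hreg : ∃ L : ℝ, Filter.Tendsto U (nhdsWithin 0 (Ioi 0)) (nhds L)) :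
    ∀ r ∈ Ioo (0:ℝ) R, U r = 0 := by
  obtain ⟨L, hL⟩ := hreg
  refine eqOn_zero_of_mul_deriv_eq_of_tendsto (n := l) (by omega) hU (fun r hr => ?_) hL
  have h1_deriv : (κ * l * ((l:ℝ) + 1) / 2 - m) * U' r
      = (l:ℝ) * Q * (W' r + ((l:ℝ) + 2) * V' r) :=
    ((hU r hr).const_mul _).unique <|
      (((hW r hr).add ((hV r hr).const_mul _)).const_mul _).congr_of_eventuallyEq <| by
        filter_upwards [isOpen_Ioo.mem_nhds hr] with x hx
        simpa only [Pi.add_apply] using h1 x hx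
  have hm0 : (m:ℝ) ≠ 0 := Nat.cast_ne_zero.mpr (by omega)
  exact mul_deriv_eq_of_curl_equations hm0 (by positivity) hr.1.ne' h1_deriv (h2 r hr)

/-- For an axial-led hybrid mode with `l ≥ m+1 ≥ 2`, the two
components of the curl of the perturbed Euler equation together with regularity
of `U` at the center of the star force `U ≡ 0` on `(0,R)`. -/
theorem stmt_3 (R : ℝ) (hR : 0 < R) (l m : ℕ) (hl : 1 ≤ l) (hm : 1 ≤ m)
    (κ Q : ℝ) (U V W U' V' W' : ℝ → ℝ)
    (hU : ∀ r ∈ Ioo (0:ℝ) R, HasDerivAt U (U' r) r)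
    (hV : ∀ r ∈ Ioo (0:ℝ) R, HasDerivAt V (V' r) r)
    (hW : ∀ r ∈ Ioo (0:ℝ) R, HasDerivAt W (W' r) r)
    (h1 : ∀ r ∈ Ioo (0:ℝ) R,
      (κ * l * ((l:ℝ) + 1) / 2 - m) * U r = (l:ℝ) * Q * (W r + ((l:ℝ) + 2) * V r))
    (h2 : ∀ r ∈ Ioo (0:ℝ) R,
      Q * (((l:ℝ) + 2) * V' r + W' r)
        = ((m:ℝ) + κ * ((l:ℝ) + 1) / 2) * U' r + (m:ℝ) * ((l:ℝ) + 1) * U r / r)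
    (hreg : ∃ L : ℝ, Filter.Tendsto U (nhdsWithin 0 (Ioi 0)) (nhds L)) :
    ∀ r ∈ Ioo (0:ℝ) R, U r = 0 :=
  stmt_3_general R l m hl hm κ Q U V W U' V' W' hU hV hW h1 h2 hreg
end

section
/- Let R > 0, let l ≥ 1 and m ≥ 0 be integers, and let κ, Q be real numbers. Suppose V, W, U : ℝ → ℝ are differentiable at every r ∈ (0,R) and satisfy, for all r ∈ (0,R): (i) W(r) + (l+1)·V(r) = 0, and (ii) 0 = −[ ( κ·(l+1)/2 + m )·V'(r) + m·(l+1)·V(r)/r − ( κ·(l+1)/2 )·W(r)/r ] + (l+2)·Q·[ U'(r) + (l+1)·U(r)/r ]. Then the function F(r) := −( κ·(l+1)/2 + m )·V(r) + (l+2)·Q·U(r) satisfies F'(r) + ((l+1)/r)·F(r) = 0 for all r ∈ (0,R), and consequently r ↦ r^(l+1)·F(r) is constant on (0,R). -/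
open Set

/-- Substituting `w = -L v` makes the `m`-term and the `κ`-term of the `φ`-component recombine
into `(c + m) (v' + L v / r)`, with `c = κ (l+1)/2`. -/
lemma deriv_add_div_mul_eq_zero_of_curl_components {c m L b r v w u v' u' : ℝ} (hr : r ≠ 0)
    (h1 : w + L * v = 0)
    (h2 : 0 = -((c + m) * v' + m * L * v / r - c * w / r) + b * (u' + L * u / r)) :
    (-(c + m) * v' + b * u') + L / r * (-(c + m) * v + b * u) = 0 := by
  obtain rfl : w = -(L * v) := by linear_combination h1
  field_simp at h2 ⊢
  linear_combination -h2

lemma hasDerivAt_pow_mul_of_deriv_add_div_mul_eq_zero {n : ℕ} {f : ℝ → ℝ} {f' r : ℝ}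
    (hr : r ≠ 0) (hf : HasDerivAt f f' r) (hode : f' + n / r * f r = 0) :
    HasDerivAt (fun x => x ^ n * f x) 0 r := by
  refine ((hasDerivAt_pow n r).mul hf).congr_deriv ?_
  rcases n with _ | n
  · simpa using hode
  · field_simp at hode
    push_cast [pow_succ] at hode ⊢
    linear_combination r ^ n * hode

lemma pow_mul_eq_of_deriv_add_div_mul_eq_zero {s : Set ℝ} (hs : Convex ℝ s)
    (h0 : (0 : ℝ) ∉ s) {n : ℕ} {f f' : ℝ → ℝ} (hf : ∀ r ∈ s, HasDerivAt f (f' r) r)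
    (hode : ∀ r ∈ s, f' r + n / r * f r = 0) {r t : ℝ} (hr : r ∈ s) (ht : t ∈ s) :
    r ^ n * f r = t ^ n * f t := by
  have hderiv : ∀ x ∈ s, HasDerivWithinAt (fun x => x ^ n * f x) 0 s x := fun x hx =>
    (hasDerivAt_pow_mul_of_deriv_add_div_mul_eq_zero (ne_of_mem_of_not_mem hx h0) (hf x hx)
      (hode x hx)).hasDerivWithinAt
  have := hs.norm_image_sub_le_of_norm_hasDerivWithin_le hderiv (C := 0) (by simp) ht hr
  simpa [sub_eq_zero] using this

theorem stmt_4_general (R : ℝ) (l m : ℕ)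
    (κ Q : ℝ) (V W U V' U' : ℝ → ℝ)
    (hV : ∀ r ∈ Ioo (0:ℝ) R, HasDerivAt V (V' r) r)
    (hU : ∀ r ∈ Ioo (0:ℝ) R, HasDerivAt U (U' r) r)
    (h1 : ∀ r ∈ Ioo (0:ℝ) R, W r + ((l:ℝ) + 1) * V r = 0)
    (h2 : ∀ r ∈ Ioo (0:ℝ) R,
      0 = -((κ * ((l:ℝ) + 1) / 2 + m) * V' r + (m:ℝ) * ((l:ℝ) + 1) * V r / r
            - (κ * ((l:ℝ) + 1) / 2) * W r / r)
          + ((l:ℝ) + 2) * Q * (U' r + ((l:ℝ) + 1) * U r / r)) :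
    (∀ r ∈ Ioo (0:ℝ) R,
      (-(κ * ((l:ℝ) + 1) / 2 + m) * V' r + ((l:ℝ) + 2) * Q * U' r)
        + (((l:ℝ) + 1) / r) *
            (-(κ * ((l:ℝ) + 1) / 2 + m) * V r + ((l:ℝ) + 2) * Q * U r) = 0) ∧
    (∀ r ∈ Ioo (0:ℝ) R, ∀ s ∈ Ioo (0:ℝ) R,
      r ^ (l + 1) * (-(κ * ((l:ℝ) + 1) / 2 + m) * V r + ((l:ℝ) + 2) * Q * U r)
        = s ^ (l + 1) * (-(κ * ((l:ℝ) + 1) / 2 + m) * V s + ((l:ℝ) + 2) * Q * U s)) := by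
  have hode : ∀ r ∈ Ioo (0:ℝ) R,
      (-(κ * ((l:ℝ) + 1) / 2 + m) * V' r + ((l:ℝ) + 2) * Q * U' r)
        + (((l + 1 : ℕ) : ℝ) / r) *
            (-(κ * ((l:ℝ) + 1) / 2 + m) * V r + ((l:ℝ) + 2) * Q * U r) = 0 := fun r hr => by
    push_cast
    exact deriv_add_div_mul_eq_zero_of_curl_components hr.1.ne' (h1 r hr) (h2 r hr)
  refine ⟨by exact_mod_cast hode, fun r hr s hs => ?_⟩
  exact pow_mul_eq_of_deriv_add_div_mul_eq_zero (convex_Ioo 0 R) (lt_irrefl 0 ·.1)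
    (fun x hx => ((hV x hx).const_mul _).add ((hU x hx).const_mul _)) hode hr hs

/-- For a polar-led hybrid mode (`m ≥ 0`), the combination
`F = −(κ(l+1)/2 + m)·V + (l+2)·Q·U` satisfies `F' + ((l+1)/r)·F = 0` on `(0,R)`,
hence `r^(l+1) · F` is constant there. -/
theorem stmt_4 (R : ℝ) (hR : 0 < R) (l m : ℕ) (hl : 1 ≤ l)
    (κ Q : ℝ) (V W U V' W' U' : ℝ → ℝ)
    (hV : ∀ r ∈ Ioo (0:ℝ) R, HasDerivAt V (V' r) r)
    (hW : ∀ r ∈ Ioo (0:ℝ) R, HasDerivAt W (W' r) r)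
    (hU : ∀ r ∈ Ioo (0:ℝ) R, HasDerivAt U (U' r) r)
    (h1 : ∀ r ∈ Ioo (0:ℝ) R, W r + ((l:ℝ) + 1) * V r = 0)
    (h2 : ∀ r ∈ Ioo (0:ℝ) R,
      0 = -((κ * ((l:ℝ) + 1) / 2 + m) * V' r + (m:ℝ) * ((l:ℝ) + 1) * V r / r
            - (κ * ((l:ℝ) + 1) / 2) * W r / r)
          + ((l:ℝ) + 2) * Q * (U' r + ((l:ℝ) + 1) * U r / r)) :
    (∀ r ∈ Ioo (0:ℝ) R,
      (-(κ * ((l:ℝ) + 1) / 2 + m) * V' r + ((l:ℝ) + 2) * Q * U' r)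
        + (((l:ℝ) + 1) / r) *
            (-(κ * ((l:ℝ) + 1) / 2 + m) * V r + ((l:ℝ) + 2) * Q * U r) = 0) ∧
    (∀ r ∈ Ioo (0:ℝ) R, ∀ s ∈ Ioo (0:ℝ) R,
      r ^ (l + 1) * (-(κ * ((l:ℝ) + 1) / 2 + m) * V r + ((l:ℝ) + 2) * Q * U r)
        = s ^ (l + 1) * (-(κ * ((l:ℝ) + 1) / 2 + m) * V s + ((l:ℝ) + 2) * Q * U s)) :=
  stmt_4_general R l m κ Q V W U V' U' hV hU h1 h2
end

section
/- Let R > 0, let l ≥ 1 be an integer, and let κ, Q be real numbers. Suppose V, W, U : ℝ → ℝ are differentiable at every r ∈ (0,R) and satisfy, for all r ∈ (0,R): (i) W(r) + (l+1)·V(r) = 0, and (ii) 0 = −( κ·(l+1)/2 )·[ V'(r) − W(r)/r ] + (l+2)·Q·[ U'(r) + (l+1)·U(r)/r ]. Then the function F(r) := −( κ·(l+1)/2 )·V(r) + (l+2)·Q·U(r) satisfies F'(r) + ((l+1)/r)·F(r) = 0 for all r ∈ (0,R), and consequently r ↦ r^(l+1)·F(r) is constant on (0,R). -/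
open Set

/-!
Substituting `W = -(l+1) V` from (i) turns (ii) into `F' + ((l+1)/r) F = 0` for the linear
combination `F`. This Euler-type equation says exactly that `r^(l+1) F` has zero derivative,
so it is constant on the interval `(0,R)`.
-/

theorem hasDerivAt_pow_mul_eq_zero {F : ℝ → ℝ} {F' r : ℝ} (k : ℕ) (hr : r ≠ 0)
    (hF : HasDerivAt F F' r) (hode : F' + k / r * F r = 0) :
    HasDerivAt (fun x => x ^ k * F x) 0 r := by
  have hF' : F' = -(k / r * F r) := by linarith
  refine ((hasDerivAt_pow k r).mul hF).congr_deriv ?_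
  rw [hF']
  rcases k with _ | k
  · simp
  · field_simp
    push_cast
    ring

theorem pow_mul_eq_of_hasDerivAt_add_div_mul_eq_zero {s : Set ℝ} (hs : IsOpen s)
    (hs' : IsPreconnected s) (h0 : (0 : ℝ) ∉ s) {F F' : ℝ → ℝ} (k : ℕ)
    (hF : ∀ r ∈ s, HasDerivAt F (F' r) r) (hode : ∀ r ∈ s, F' r + k / r * F r = 0)
    {r t : ℝ} (hr : r ∈ s) (ht : t ∈ s) : r ^ k * F r = t ^ k * F t := by
  have hderiv : ∀ x ∈ s, HasDerivAt (fun x => x ^ k * F x) 0 x := fun x hx =>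
    hasDerivAt_pow_mul_eq_zero k (ne_of_mem_of_not_mem hx h0) (hF x hx) (hode x hx)
  exact hs.is_const_of_deriv_eq_zero hs'
    (fun x hx => (hderiv x hx).differentiableAt.differentiableWithinAt)
    (fun x hx => (hderiv x hx).deriv) hr ht

theorem stmt_5_general (R : ℝ) (l : ℕ)
    (κ Q : ℝ) (V W U V' U' : ℝ → ℝ)
    (hV : ∀ r ∈ Ioo (0:ℝ) R, HasDerivAt V (V' r) r)
    (hU : ∀ r ∈ Ioo (0:ℝ) R, HasDerivAt U (U' r) r)
    (h1 : ∀ r ∈ Ioo (0:ℝ) R, W r + ((l:ℝ) + 1) * V r = 0)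
    (h2 : ∀ r ∈ Ioo (0:ℝ) R,
      0 = -(κ * ((l:ℝ) + 1) / 2) * (V' r - W r / r)
          + ((l:ℝ) + 2) * Q * (U' r + ((l:ℝ) + 1) * U r / r)) :
    (∀ r ∈ Ioo (0:ℝ) R,
      (-(κ * ((l:ℝ) + 1) / 2) * V' r + ((l:ℝ) + 2) * Q * U' r)
        + (((l:ℝ) + 1) / r) *
            (-(κ * ((l:ℝ) + 1) / 2) * V r + ((l:ℝ) + 2) * Q * U r) = 0) ∧
    (∀ r ∈ Ioo (0:ℝ) R, ∀ s ∈ Ioo (0:ℝ) R,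
      r ^ (l + 1) * (-(κ * ((l:ℝ) + 1) / 2) * V r + ((l:ℝ) + 2) * Q * U r)
        = s ^ (l + 1) * (-(κ * ((l:ℝ) + 1) / 2) * V s + ((l:ℝ) + 2) * Q * U s)) := by
  set c₁ : ℝ := -(κ * ((l:ℝ) + 1) / 2)
  set c₂ : ℝ := ((l:ℝ) + 2) * Q
  have hode : ∀ r ∈ Ioo (0:ℝ) R,
      (c₁ * V' r + c₂ * U' r) + (((l:ℝ) + 1) / r) * (c₁ * V r + c₂ * U r) = 0 := fun r hr => by
    linear_combination -h2 r hr + c₁ / r * h1 r hr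
  refine ⟨hode, fun r hr s hs => ?_⟩
  refine pow_mul_eq_of_hasDerivAt_add_div_mul_eq_zero isOpen_Ioo isPreconnected_Ioo
    (fun h => lt_irrefl 0 h.1) (l + 1) (fun x hx => ((hV x hx).const_mul c₁).add
      ((hU x hx).const_mul c₂)) (fun x hx => ?_) hr hs
  exact_mod_cast hode x hx

/-- Axisymmetric (`m = 0`) polar-led case: the combination
`F = −(κ(l+1)/2)·V + (l+2)·Q·U` satisfies `F' + ((l+1)/r)·F = 0` on `(0,R)`,
hence `r^(l+1) · F` is constant there. -/
theorem stmt_5 (R : ℝ) (hR : 0 < R) (l : ℕ) (hl : 1 ≤ l)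
    (κ Q : ℝ) (V W U V' W' U' : ℝ → ℝ)
    (hV : ∀ r ∈ Ioo (0:ℝ) R, HasDerivAt V (V' r) r)
    (hW : ∀ r ∈ Ioo (0:ℝ) R, HasDerivAt W (W' r) r)
    (hU : ∀ r ∈ Ioo (0:ℝ) R, HasDerivAt U (U' r) r)
    (h1 : ∀ r ∈ Ioo (0:ℝ) R, W r + ((l:ℝ) + 1) * V r = 0)
    (h2 : ∀ r ∈ Ioo (0:ℝ) R,
      0 = -(κ * ((l:ℝ) + 1) / 2) * (V' r - W r / r)
          + ((l:ℝ) + 2) * Q * (U' r + ((l:ℝ) + 1) * U r / r)) :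
    (∀ r ∈ Ioo (0:ℝ) R,
      (-(κ * ((l:ℝ) + 1) / 2) * V' r + ((l:ℝ) + 2) * Q * U' r)
        + (((l:ℝ) + 1) / r) *
            (-(κ * ((l:ℝ) + 1) / 2) * V r + ((l:ℝ) + 2) * Q * U r) = 0) ∧
    (∀ r ∈ Ioo (0:ℝ) R, ∀ s ∈ Ioo (0:ℝ) R,
      r ^ (l + 1) * (-(κ * ((l:ℝ) + 1) / 2) * V r + ((l:ℝ) + 2) * Q * U r)
        = s ^ (l + 1) * (-(κ * ((l:ℝ) + 1) / 2) * V s + ((l:ℝ) + 2) * Q * U s)) :=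
  stmt_5_general R l κ Q V W U V' U' hV hU h1 h2
end

section
/- Let R > 0, let l ≥ 1 and m ≥ 0 be integers, and let κ, Q be real numbers. Suppose V, W, U : ℝ → ℝ are differentiable at every r ∈ (0,R) and satisfy, for all r ∈ (0,R): (i) W(r) + (l+1)·V(r) = 0, and (ii) 0 = −[ ( κ·(l+1)/2 + m )·V'(r) + m·(l+1)·V(r)/r − ( κ·(l+1)/2 )·W(r)/r ] + (l+2)·Q·[ U'(r) + (l+1)·U(r)/r ]. If in addition the function F(r) := −( κ·(l+1)/2 + m )·V(r) + (l+2)·Q·U(r) tends to a finite limit as r → 0⁺ (regularity at the center of the star), then F(r) = 0 for all r ∈ (0,R). -/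
/-!
Regularity forces the polar combination `F = -(κ(l+1)/2 + m) V + (l+2) Q U` to vanish: after
eliminating `W` with (i), equation (ii) is the Euler equation `r F' + (l+1) F = 0`, so
`r ^ (l+1) * F` is constant on `(0,R)`. A finite limit of `F` at `0⁺` makes that constant tend to
`0`, hence it is `0`; otherwise `F` would blow up like `r ^ (-(l+1))`.
-/

open Set Filter Topology

theorem hasDerivAt_pow_succ_mul_of_euler {F : ℝ → ℝ} {F' r : ℝ} (k : ℕ)
    (hF : HasDerivAt F F' r) (hode : r * F' + ((k : ℝ) + 1) * F r = 0) :
    HasDerivAt (fun x => x ^ (k + 1) * F x) 0 r := by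
  have hpow : HasDerivAt (fun x : ℝ => x ^ (k + 1)) (((k : ℝ) + 1) * r ^ k) r := by
    simpa using hasDerivAt_pow (k + 1) r
  have hzero : ((k : ℝ) + 1) * r ^ k * F r + r ^ (k + 1) * F' = 0 := by
    linear_combination r ^ k * hode
  exact (hpow.mul hF).congr_deriv hzero

theorem eqOn_zero_of_euler_of_tendsto {R : ℝ} {k : ℕ} {F F' : ℝ → ℝ}
    (hF : ∀ r ∈ Ioo 0 R, HasDerivAt F (F' r) r)
    (hode : ∀ r ∈ Ioo 0 R, r * F' r + ((k : ℝ) + 1) * F r = 0)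
    {L : ℝ} (hL : Tendsto F (𝓝[>] 0) (𝓝 L)) :
    ∀ r ∈ Ioo 0 R, F r = 0 := by
  intro r hr
  set G : ℝ → ℝ := fun x => x ^ (k + 1) * F x
  have hG : ∀ x ∈ Ioo 0 R, HasDerivAt G 0 x := fun x hx =>
    hasDerivAt_pow_succ_mul_of_euler k (hF x hx) (hode x hx)
  have hconst : ∀ x ∈ Ioo 0 R, G x = G r := fun x hx =>
    isOpen_Ioo.is_const_of_deriv_eq_zero isPreconnected_Ioo
      (fun y hy => (hG y hy).differentiableAt.differentiableWithinAt)
      (fun y hy => (hG y hy).deriv) hx hr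
  have hG_const : Tendsto G (𝓝[>] 0) (𝓝 (G r)) :=
    tendsto_const_nhds.congr' <| eventuallyEq_of_mem (Ioo_mem_nhdsGT (hr.1.trans hr.2))
      fun x hx => (hconst x hx).symm
  have hG_zero : Tendsto G (𝓝[>] 0) (𝓝 0) := by
    have hpow : Tendsto (fun x : ℝ => x ^ (k + 1)) (𝓝[>] 0) (𝓝 0) := by
      simpa using ((continuous_pow (k + 1)).tendsto (0 : ℝ)).mono_left nhdsWithin_le_nhds
    simpa using hpow.mul hL
  have hGr : r ^ (k + 1) * F r = 0 := tendsto_nhds_unique hG_const hG_zero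
  exact (mul_eq_zero.mp hGr).resolve_left (pow_ne_zero _ hr.1.ne')

theorem polar_combination_euler {l m : ℕ} {κ Q r v w u v' u' : ℝ} (hr : r ≠ 0)
    (h1 : w + ((l : ℝ) + 1) * v = 0)
    (h2 : 0 = -((κ * ((l : ℝ) + 1) / 2 + m) * v' + (m : ℝ) * ((l : ℝ) + 1) * v / r
            - (κ * ((l : ℝ) + 1) / 2) * w / r)
          + ((l : ℝ) + 2) * Q * (u' + ((l : ℝ) + 1) * u / r)) :
    r * (-(κ * ((l : ℝ) + 1) / 2 + m) * v' + ((l : ℝ) + 2) * Q * u')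
      + ((l : ℝ) + 1) * (-(κ * ((l : ℝ) + 1) / 2 + m) * v + ((l : ℝ) + 2) * Q * u) = 0 := by
  rw [show w = -(((l : ℝ) + 1) * v) by linarith] at h2
  field_simp at h2
  linear_combination (-1 / 2 : ℝ) * h2

theorem stmt_6_general (R : ℝ) (l m : ℕ)
    (κ Q : ℝ) (V W U V' U' : ℝ → ℝ)
    (hV : ∀ r ∈ Ioo (0:ℝ) R, HasDerivAt V (V' r) r)
    (hU : ∀ r ∈ Ioo (0:ℝ) R, HasDerivAt U (U' r) r)
    (h1 : ∀ r ∈ Ioo (0:ℝ) R, W r + ((l:ℝ) + 1) * V r = 0)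
    (h2 : ∀ r ∈ Ioo (0:ℝ) R,
      0 = -((κ * ((l:ℝ) + 1) / 2 + m) * V' r + (m:ℝ) * ((l:ℝ) + 1) * V r / r
            - (κ * ((l:ℝ) + 1) / 2) * W r / r)
          + ((l:ℝ) + 2) * Q * (U' r + ((l:ℝ) + 1) * U r / r))
    (hreg : ∃ L : ℝ, Filter.Tendsto
      (fun r => -(κ * ((l:ℝ) + 1) / 2 + m) * V r + ((l:ℝ) + 2) * Q * U r)
      (nhdsWithin 0 (Ioi 0)) (nhds L)) :
    ∀ r ∈ Ioo (0:ℝ) R,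
      -(κ * ((l:ℝ) + 1) / 2 + m) * V r + ((l:ℝ) + 2) * Q * U r = 0 := by
  obtain ⟨L, hL⟩ := hreg
  exact eqOn_zero_of_euler_of_tendsto (k := l)
    (fun r hr => ((hV r hr).const_mul _).add ((hU r hr).const_mul _))
    (fun r hr => polar_combination_euler hr.1.ne' (h1 r hr) (h2 r hr)) hL

/-- Polar-led case with regularity: the combination
`F = −(κ(l+1)/2 + m)·V + (l+2)·Q·U` solves `F' + ((l+1)/r)·F = 0`; if moreover
`F` has a finite limit as `r → 0⁺` (regularity at the center of the star),
then `F ≡ 0` on `(0,R)`. -/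
theorem stmt_6 (R : ℝ) (hR : 0 < R) (l m : ℕ) (hl : 1 ≤ l)
    (κ Q : ℝ) (V W U V' W' U' : ℝ → ℝ)
    (hV : ∀ r ∈ Ioo (0:ℝ) R, HasDerivAt V (V' r) r)
    (hW : ∀ r ∈ Ioo (0:ℝ) R, HasDerivAt W (W' r) r)
    (hU : ∀ r ∈ Ioo (0:ℝ) R, HasDerivAt U (U' r) r)
    (h1 : ∀ r ∈ Ioo (0:ℝ) R, W r + ((l:ℝ) + 1) * V r = 0)
    (h2 : ∀ r ∈ Ioo (0:ℝ) R,
      0 = -((κ * ((l:ℝ) + 1) / 2 + m) * V' r + (m:ℝ) * ((l:ℝ) + 1) * V r / r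
            - (κ * ((l:ℝ) + 1) / 2) * W r / r)
          + ((l:ℝ) + 2) * Q * (U' r + ((l:ℝ) + 1) * U r / r))
    (hreg : ∃ L : ℝ, Filter.Tendsto
      (fun r => -(κ * ((l:ℝ) + 1) / 2 + m) * V r + ((l:ℝ) + 2) * Q * U r)
      (nhdsWithin 0 (Ioi 0)) (nhds L)) :
    ∀ r ∈ Ioo (0:ℝ) R,
      -(κ * ((l:ℝ) + 1) / 2 + m) * V r + ((l:ℝ) + 2) * Q * U r = 0 :=
  stmt_6_general R l m κ Q V W U V' U' hV hU h1 h2 hreg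
end

section
/- Let l ≥ 1 be an integer and let H : ℝ³ → ℝ be twice continuously differentiable, harmonic (∑_{i=1}^{3} ∂²H/∂x_i² = 0 everywhere), and positively homogeneous of degree l (H(tx) = t^l·H(x) for all t > 0 and all x). Let ρ, W, V : ℝ → ℝ be differentiable on (0,∞). Define Y(x) = H(x)/‖x‖^l and the vector field v(x) = ( W(‖x‖)/‖x‖ )·Y(x)·( x/‖x‖ ) + V(‖x‖)·∇Y(x) on ℝ³ \ {0}. Then for every x ≠ 0, with r = ‖x‖, the divergence of the vector field ρ(‖·‖)·v at x equals (1/r²)·[ (d/dr)( r·ρ(r)·W(r) ) − l(l+1)·ρ(r)·V(r) ]·Y(x). In particular, ∇·(ρ v) vanishes identically on ℝ³ \ {0} whenever (d/dr)( r ρ W ) − l(l+1) ρ V = 0 on (0,∞). -/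
/-
Away from the origin, `∇Y = ∇H / r^l - l H x / r^(l+2)`, so
`ρ v = f(r) H(x) x + g(r) ∇H(x)` with `f = (ρW - lρV) / r^(l+2)` and `g = ρV / r^l`.
By the product rule, Euler's identity `⟪x, ∇H⟫ = l H` and `ΔH = 0`, the divergence of this
field in `ℝⁿ` is `(r f' + (l + n) f + l g' / r) H`; for `n = 3` a one-variable computation
turns the coefficient into `((rρW)' - l(l+1)ρV) / r^(l+2)`.
-/

open Set

/-- The spherical harmonic `Y(x) = H(x)/‖x‖^l` built from a harmonic polynomial `H`
homogeneous of degree `l`. -/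
noncomputable def sphHarm (l : ℕ) (H : EuclideanSpace ℝ (Fin 3) → ℝ)
    (x : EuclideanSpace ℝ (Fin 3)) : ℝ :=
  H x / ‖x‖ ^ l

/-- The polar-parity vector field
`v(x) = (W(‖x‖)/‖x‖)·Y(x)·(x/‖x‖) + V(‖x‖)·∇Y(x)`. -/
noncomputable def polarField (l : ℕ) (H : EuclideanSpace ℝ (Fin 3) → ℝ)
    (W V : ℝ → ℝ) (x : EuclideanSpace ℝ (Fin 3)) : EuclideanSpace ℝ (Fin 3) :=
  ((W ‖x‖ / ‖x‖) * sphHarm l H x) • (‖x‖⁻¹ • x) + V ‖x‖ • gradient (sphHarm l H) x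

open InnerProductSpace Filter Topology

theorem hasDerivAt_inv_pow (n : ℕ) {s : ℝ} (hs : s ≠ 0) :
    HasDerivAt (fun t => (t ^ n)⁻¹) (-n * (s ^ n)⁻¹ / s) s := by
  refine ((hasDerivAt_pow n s).inv (pow_ne_zero n hs)).congr_deriv ?_
  rcases n with _ | n
  · simp
  · rw [Nat.add_sub_cancel]
    field_simp
    ring

theorem fderiv_apply_self_of_homogeneous {E : Type*} [NormedAddCommGroup E] [NormedSpace ℝ E]
    {H : E → ℝ} {l : ℕ} {x : E} (hH : DifferentiableAt ℝ H x)
    (hhom : ∀ t : ℝ, 0 < t → H (t • x) = t ^ l * H x) :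
    fderiv ℝ H x x = l * H x := by
  have hray : HasDerivAt (fun t : ℝ => H (t • x)) (fderiv ℝ H x ((1 : ℝ) • x)) 1 := by
    have hH' : HasFDerivAt H (fderiv ℝ H x) ((1 : ℝ) • x) := by
      rw [one_smul]; exact hH.hasFDerivAt
    exact hH'.comp_hasDerivAt (1 : ℝ) ((hasDerivAt_id' (1 : ℝ)).smul_const x)
  rw [one_smul] at hray
  have hpow : HasDerivAt (fun t : ℝ => H (t • x)) (l * H x) 1 := by
    have h := (hasDerivAt_pow l (1 : ℝ)).mul_const (H x)
    simp only [one_pow, mul_one] at h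
    exact h.congr_of_eventuallyEq <| eventually_of_mem (Ioi_mem_nhds one_pos) hhom
  exact hray.unique hpow

section InnerProductSpace

variable {E : Type*} [NormedAddCommGroup E] [InnerProductSpace ℝ E] {x : E}

theorem hasFDerivAt_norm_of_ne_zero (hx : x ≠ 0) :
    HasFDerivAt (‖·‖) (‖x‖⁻¹ • innerSL ℝ x) x := by
  have h := (hasStrictFDerivAt_norm_sq x).hasFDerivAt.sqrt (by positivity)
  simp only [Real.sqrt_sq (norm_nonneg _)] at h
  refine h.congr_fderiv ?_
  ext v
  simp only [smul_apply, coe_innerSL_apply, nsmul_eq_mul, Nat.cast_ofNat, smul_eq_mul]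
  field_simp

theorem HasDerivAt.comp_norm {f : ℝ → ℝ} {f' : ℝ} (hf : HasDerivAt f f' ‖x‖) (hx : x ≠ 0) :
    HasFDerivAt (fun y => f ‖y‖) ((f' / ‖x‖) • innerSL ℝ x) x := by
  refine (hf.comp_hasFDerivAt x (hasFDerivAt_norm_of_ne_zero hx)).congr_fderiv ?_
  rw [smul_smul, div_eq_mul_inv]

variable [CompleteSpace E]

theorem hasGradientAt_div_norm_pow {H : E → ℝ} (l : ℕ) (hH : DifferentiableAt ℝ H x)
    (hx : x ≠ 0) :
    HasGradientAt (fun y => H y / ‖y‖ ^ l)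
      ((‖x‖ ^ l)⁻¹ • gradient H x - (l * H x / ‖x‖ ^ (l + 2)) • x) x := by
  have h := hH.hasFDerivAt.mul ((hasDerivAt_inv_pow l (norm_ne_zero_iff.2 hx)).comp_norm hx)
  rw [hasGradientAt_iff_hasFDerivAt]
  refine (h.congr_fderiv ?_ : HasFDerivAt (fun y => H y * (‖y‖ ^ l)⁻¹) _ x)
  ext v
  simp only [add_apply, smul_apply, coe_innerSL_apply, smul_eq_mul, map_sub, map_smul,
    toDual_gradient, sub_apply, toDual_apply_apply]
  field_simp
  ring

theorem DifferentiableAt.gradient {H : E → ℝ} (hH : DifferentiableAt ℝ (fderiv ℝ H) x) :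
    DifferentiableAt ℝ (gradient H) x :=
  (toDual ℝ E).symm.toContinuousLinearEquiv.differentiableAt.comp x hH

end InnerProductSpace

section Divergence

variable {ι : Type*} [Fintype ι] [DecidableEq ι]

noncomputable def divergence (F : EuclideanSpace ℝ ι → EuclideanSpace ℝ ι)
    (x : EuclideanSpace ℝ ι) : ℝ :=
  ∑ i, fderiv ℝ F x (EuclideanSpace.single i 1) i

theorem EuclideanSpace.sum_apply_single_mul (L : EuclideanSpace ℝ ι →L[ℝ] ℝ)
    (u : EuclideanSpace ℝ ι) : ∑ i, L (EuclideanSpace.single i 1) * u i = L u := by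
  conv_rhs => rw [← (EuclideanSpace.basisFun ι ℝ).sum_repr u]
  simp [map_sum, mul_comm]

theorem EuclideanSpace.gradient_apply (f : EuclideanSpace ℝ ι → ℝ) (y : EuclideanSpace ℝ ι)
    (i : ι) : gradient f y i = fderiv ℝ f y (EuclideanSpace.single i 1) := by
  rw [← inner_gradient_left, EuclideanSpace.inner_single_right]
  simp

variable {F G : EuclideanSpace ℝ ι → EuclideanSpace ℝ ι} {x : EuclideanSpace ℝ ι}

theorem Filter.EventuallyEq.divergence_eq (h : F =ᶠ[𝓝 x] G) :
    divergence F x = divergence G x := by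
  simp only [divergence, h.fderiv_eq]

theorem divergence_add (hF : DifferentiableAt ℝ F x) (hG : DifferentiableAt ℝ G x) :
    divergence (fun y => F y + G y) x = divergence F x + divergence G x := by
  simp only [divergence, fderiv_fun_add hF hG, add_apply, PiLp.add_apply,
    Finset.sum_add_distrib]

theorem divergence_smul {φ : EuclideanSpace ℝ ι → ℝ} (hφ : DifferentiableAt ℝ φ x)
    (hF : DifferentiableAt ℝ F x) :
    divergence (fun y => φ y • F y) x = fderiv ℝ φ x (F x) + φ x * divergence F x := by
  simp only [divergence, fderiv_fun_smul hφ hF, add_apply,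
    ContinuousLinearMap.smulRight_apply, smul_apply, PiLp.add_apply,
    PiLp.smul_apply, smul_eq_mul, Finset.sum_add_distrib, ← Finset.mul_sum,
    EuclideanSpace.sum_apply_single_mul]
  ring

theorem divergence_id : divergence (fun y => y) x = Fintype.card ι := by
  simp [divergence]

theorem divergence_gradient {f : EuclideanSpace ℝ ι → ℝ}
    (hf : DifferentiableAt ℝ (gradient f) x) :
    divergence (gradient f) x = ∑ i, fderiv ℝ (fun y => fderiv ℝ f y
      (EuclideanSpace.single i 1)) x (EuclideanSpace.single i 1) := by
  refine Finset.sum_congr rfl fun i _ => ?_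
  have h := ((PiLp.proj 2 (fun _ => ℝ) i).hasFDerivAt.comp x hf.hasFDerivAt).fderiv
  have hcoord : (fun y => fderiv ℝ f y (EuclideanSpace.single i 1)) = fun y => gradient f y i :=
    funext fun y => (EuclideanSpace.gradient_apply f y i).symm
  simp only [Function.comp_def, PiLp.proj_apply] at h
  rw [hcoord, h]
  rfl

theorem divergence_radial_mul_smul_add_smul_gradient {f g : ℝ → ℝ}
    {H : EuclideanSpace ℝ ι → ℝ} {l : ℕ} {x : EuclideanSpace ℝ ι} (hx : x ≠ 0)
    (hf : DifferentiableAt ℝ f ‖x‖) (hg : DifferentiableAt ℝ g ‖x‖)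
    (hH : DifferentiableAt ℝ H x) (hH2 : DifferentiableAt ℝ (gradient H) x)
    (hEuler : fderiv ℝ H x x = l * H x)
    (hharm : ∑ i, fderiv ℝ (fun y => fderiv ℝ H y (EuclideanSpace.single i 1)) x
      (EuclideanSpace.single i 1) = 0) :
    divergence (fun y => (f ‖y‖ * H y) • y + g ‖y‖ • gradient H y) x
      = (‖x‖ * deriv f ‖x‖ + (l + Fintype.card ι) * f ‖x‖ + l * deriv g ‖x‖ / ‖x‖) * H x := by
  have hf' := hf.hasDerivAt.comp_norm hx
  have hg' := hg.hasDerivAt.comp_norm hx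
  have hfH := hf'.fun_mul hH.hasFDerivAt
  rw [divergence_add (hfH.differentiableAt.fun_smul differentiableAt_fun_id)
      (hg'.differentiableAt.fun_smul hH2),
    divergence_smul hfH.differentiableAt differentiableAt_fun_id,
    divergence_smul hg'.differentiableAt hH2, divergence_id, divergence_gradient hH2, hharm,
    hfH.fderiv, hg'.fderiv]
  simp only [add_apply, smul_apply, hEuler, smul_eq_mul, coe_innerSL_apply,
    real_inner_self_eq_norm_sq, inner_gradient_right, conj_trivial, mul_zero, add_zero]
  field_simp
  ring

end Divergence

section PolarField

variable {l : ℕ} {H : EuclideanSpace ℝ (Fin 3) → ℝ} {ρ W V : ℝ → ℝ}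

theorem smul_polarField_eq {y : EuclideanSpace ℝ (Fin 3)} (hH : DifferentiableAt ℝ H y)
    (hy : y ≠ 0) :
    ρ ‖y‖ • polarField l H W V y
      = ((ρ ‖y‖ * W ‖y‖ - l * ρ ‖y‖ * V ‖y‖) * (‖y‖ ^ (l + 2))⁻¹ * H y) • y
        + (ρ ‖y‖ * V ‖y‖ * (‖y‖ ^ l)⁻¹) • gradient H y := by
  have hr : ‖y‖ ≠ 0 := norm_ne_zero_iff.2 hy
  have hY : HasGradientAt (sphHarm l H) _ y := hasGradientAt_div_norm_pow l hH hy
  rw [polarField, hY.gradient, sphHarm]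
  match_scalars
  · field_simp
    ring
  · field_simp

theorem radial_divergence_coefficient_eq {r : ℝ} (hr : r ≠ 0) (hρ : DifferentiableAt ℝ ρ r)
    (hW : DifferentiableAt ℝ W r) (hV : DifferentiableAt ℝ V r) :
    r * deriv (fun s => (ρ s * W s - l * ρ s * V s) * (s ^ (l + 2))⁻¹) r
        + (l + 3) * ((ρ r * W r - l * ρ r * V r) * (r ^ (l + 2))⁻¹)
        + l * deriv (fun s => ρ s * V s * (s ^ l)⁻¹) r / r
      = 1 / r ^ 2 * (deriv (fun s => s * ρ s * W s) r - l * (l + 1) * ρ r * V r) / r ^ l := by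
  have hρ' := hρ.hasDerivAt
  have hW' := hW.hasDerivAt
  have hV' := hV.hasDerivAt
  rw [(((hρ'.fun_mul hW').fun_sub ((hρ'.const_mul (l : ℝ)).fun_mul hV')).fun_mul
      (hasDerivAt_inv_pow (l + 2) hr)).deriv,
    ((hρ'.fun_mul hV').fun_mul (hasDerivAt_inv_pow l hr)).deriv,
    (((hasDerivAt_id' r).fun_mul hρ').fun_mul hW').deriv]
  push_cast
  field_simp
  ring

theorem divergence_smul_polarField {x : EuclideanSpace ℝ (Fin 3)} (hx : x ≠ 0)
    (hH : Differentiable ℝ H) (hH2 : DifferentiableAt ℝ (gradient H) x)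
    (hEuler : fderiv ℝ H x x = l * H x)
    (hharm : ∑ i : Fin 3, fderiv ℝ (fun y => fderiv ℝ H y (EuclideanSpace.single i 1)) x
      (EuclideanSpace.single i 1) = 0)
    (hρ : DifferentiableAt ℝ ρ ‖x‖) (hW : DifferentiableAt ℝ W ‖x‖)
    (hV : DifferentiableAt ℝ V ‖x‖) :
    divergence (fun y => ρ ‖y‖ • polarField l H W V y) x
      = 1 / ‖x‖ ^ 2 * (deriv (fun s => s * ρ s * W s) ‖x‖ - l * (l + 1) * ρ ‖x‖ * V ‖x‖)
        * sphHarm l H x := by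
  have hr : ‖x‖ ≠ 0 := norm_ne_zero_iff.2 hx
  set f : ℝ → ℝ := fun s => (ρ s * W s - l * ρ s * V s) * (s ^ (l + 2))⁻¹
  set g : ℝ → ℝ := fun s => ρ s * V s * (s ^ l)⁻¹
  have hdecomp : (fun y => ρ ‖y‖ • polarField l H W V y)
      =ᶠ[𝓝 x] fun y => (f ‖y‖ * H y) • y + g ‖y‖ • gradient H y :=
    (eventually_ne_nhds hx).mono fun y hy => smul_polarField_eq (hH y) hy
  have hf : DifferentiableAt ℝ f ‖x‖ := by fun_prop (disch := exact pow_ne_zero _ hr)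
  have hg : DifferentiableAt ℝ g ‖x‖ := by fun_prop (disch := exact pow_ne_zero _ hr)
  rw [hdecomp.divergence_eq,
    divergence_radial_mul_smul_add_smul_gradient hx hf hg (hH x) hH2 hEuler hharm,
    Fintype.card_fin, Nat.cast_ofNat, radial_divergence_coefficient_eq hr hρ hW hV, sphHarm]
  ring

end PolarField

theorem stmt_8_general (l : ℕ) (H : EuclideanSpace ℝ (Fin 3) → ℝ)
    (hH : ContDiff ℝ 2 H)
    (hharm : ∀ x : EuclideanSpace ℝ (Fin 3),
      ∑ i : Fin 3, fderiv ℝ (fun y => fderiv ℝ H y (EuclideanSpace.single i 1)) x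
        (EuclideanSpace.single i 1) = 0)
    (hhom : ∀ t : ℝ, 0 < t → ∀ x : EuclideanSpace ℝ (Fin 3), H (t • x) = t ^ l * H x)
    (ρ W V : ℝ → ℝ)
    (hρ : DifferentiableOn ℝ ρ (Ioi 0))
    (hW : DifferentiableOn ℝ W (Ioi 0))
    (hV : DifferentiableOn ℝ V (Ioi 0)) :
    (∀ x : EuclideanSpace ℝ (Fin 3), x ≠ 0 →
      ∑ i : Fin 3, fderiv ℝ (fun y => ρ ‖y‖ • polarField l H W V y) x
          (EuclideanSpace.single i 1) i
        = (1 / ‖x‖ ^ 2) *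
            (deriv (fun s => s * ρ s * W s) ‖x‖
              - (l:ℝ) * ((l:ℝ) + 1) * ρ ‖x‖ * V ‖x‖) * sphHarm l H x) ∧
    ((∀ r ∈ Ioi (0:ℝ), deriv (fun s => s * ρ s * W s) r
        - (l:ℝ) * ((l:ℝ) + 1) * ρ r * V r = 0) →
      ∀ x : EuclideanSpace ℝ (Fin 3), x ≠ 0 →
        ∑ i : Fin 3, fderiv ℝ (fun y => ρ ‖y‖ • polarField l H W V y) x
          (EuclideanSpace.single i 1) i = 0) := by
  have hH1 : Differentiable ℝ H := hH.differentiable (by norm_num)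
  have hH2 : Differentiable ℝ (fderiv ℝ H) :=
    (hH.fderiv_right (m := 1) (by norm_num)).differentiable one_ne_zero
  have hdiv : ∀ x : EuclideanSpace ℝ (Fin 3), x ≠ 0 →
      divergence (fun y => ρ ‖y‖ • polarField l H W V y) x
        = (1 / ‖x‖ ^ 2) * (deriv (fun s => s * ρ s * W s) ‖x‖
          - (l:ℝ) * ((l:ℝ) + 1) * ρ ‖x‖ * V ‖x‖) * sphHarm l H x := fun x hx => by
    have hnhds : Ioi (0 : ℝ) ∈ 𝓝 ‖x‖ := Ioi_mem_nhds (norm_pos_iff.2 hx)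
    exact divergence_smul_polarField hx hH1 (hH2 x).gradient
      (fderiv_apply_self_of_homogeneous (hH1 x) fun t ht => hhom t ht x) (hharm x)
      (hρ.differentiableAt hnhds) (hW.differentiableAt hnhds) (hV.differentiableAt hnhds)
  exact ⟨hdiv, fun hode x hx => by
    rw [← divergence, hdiv x hx, hode ‖x‖ (norm_pos_iff.2 hx)]; ring⟩

/-- For `Y = H/‖x‖^l` with `H` harmonic and positively homogeneous of
degree `l`, and `v = (W(r)/r)·Y·(x/r) + V(r)·∇Y`, the divergence of `ρ(‖·‖)·v` at any
`x ≠ 0` equals `(1/r²)·[(d/dr)(r·ρ·W) − l(l+1)·ρ·V]·Y(x)` with `r = ‖x‖`; in particular,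
it vanishes on `ℝ³ \ {0}` whenever `(d/dr)(rρW) − l(l+1)ρV = 0` on `(0,∞)`. -/
theorem stmt_8 (l : ℕ) (hl : 1 ≤ l) (H : EuclideanSpace ℝ (Fin 3) → ℝ)
    (hH : ContDiff ℝ 2 H)
    (hharm : ∀ x : EuclideanSpace ℝ (Fin 3),
      ∑ i : Fin 3, fderiv ℝ (fun y => fderiv ℝ H y (EuclideanSpace.single i 1)) x
        (EuclideanSpace.single i 1) = 0)
    (hhom : ∀ t : ℝ, 0 < t → ∀ x : EuclideanSpace ℝ (Fin 3), H (t • x) = t ^ l * H x)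
    (ρ W V : ℝ → ℝ)
    (hρ : DifferentiableOn ℝ ρ (Ioi 0))
    (hW : DifferentiableOn ℝ W (Ioi 0))
    (hV : DifferentiableOn ℝ V (Ioi 0)) :
    (∀ x : EuclideanSpace ℝ (Fin 3), x ≠ 0 →
      ∑ i : Fin 3, fderiv ℝ (fun y => ρ ‖y‖ • polarField l H W V y) x
          (EuclideanSpace.single i 1) i
        = (1 / ‖x‖ ^ 2) *
            (deriv (fun s => s * ρ s * W s) ‖x‖
              - (l:ℝ) * ((l:ℝ) + 1) * ρ ‖x‖ * V ‖x‖) * sphHarm l H x) ∧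
    ((∀ r ∈ Ioi (0:ℝ), deriv (fun s => s * ρ s * W s) r
        - (l:ℝ) * ((l:ℝ) + 1) * ρ r * V r = 0) →
      ∀ x : EuclideanSpace ℝ (Fin 3), x ≠ 0 →
        ∑ i : Fin 3, fderiv ℝ (fun y => ρ ‖y‖ • polarField l H W V y) x
          (EuclideanSpace.single i 1) i = 0) :=
  stmt_8_general l H hH hharm hhom ρ W V hρ hW hV
end

section
/- Let m ≥ 1 be an integer and κ a real number. With Q_l = sqrt( (l+m)(l−m)/((2l−1)(2l+1)) ) for l ≥ m, a_l = κm/2 + (l+1)·Q_l² − l·Q_{l+1}², b_l = m² − l(l+1)·(1 − Q_l² − Q_{l+1}²), and c_l = κ·l(l+1)/2 − m, define A = Q_{m+1}·c_{m−2}·[ (κ/2)·(m+2)·c_m·c_{m+2} + m·((m+1)·a_m + b_m)·c_{m+2} − (2m+3)·(m+3)²·Q_{m+2}²·c_m ] and B = Q_{m+1}·c_{m−2}·[ (m+2)·m·((m+1)·a_m + b_m)·c_{m+2} − ( (κ/2)·(m+2)·(m+1) + m·(2m+3) )·c_m·c_{m+2} + (2m+3)·(m+3)²·(m+1)·Q_{m+2}²·c_m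 ]. Then B = −(m+1)·A; consequently, the equation A·w + B·v = 0 is equivalent (when A ≠ 0) to w − (m+1)·v = 0. -/
/-- The coefficients `A` (of `w_{1,1}`) and `B` (of `v_{1,1}`) in the
lowest-order recursion for axial-led hybrid modes satisfy `B = −(m+1)·A`; hence, when
`A ≠ 0`, the equation `A·w + B·v = 0` is equivalent to `w − (m+1)·v = 0`. -/
theorem stmt_10 (m : ℤ) (hm : 1 ≤ m) (κ : ℝ) (Q a b c : ℤ → ℝ)
    (hQ : ∀ l : ℤ, m ≤ l → Q l = Real.sqrt
      ((((l:ℝ) + m) * ((l:ℝ) - m)) / ((2*(l:ℝ) - 1) * (2*(l:ℝ) + 1))))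
    (ha : ∀ l : ℤ, m ≤ l →
      a l = κ * (m:ℝ) / 2 + ((l:ℝ) + 1) * (Q l)^2 - (l:ℝ) * (Q (l+1))^2)
    (hb : ∀ l : ℤ, m ≤ l →
      b l = (m:ℝ)^2 - (l:ℝ) * ((l:ℝ) + 1) * (1 - (Q l)^2 - (Q (l+1))^2))
    (hc : ∀ l : ℤ, c l = κ * (l:ℝ) * ((l:ℝ) + 1) / 2 - (m:ℝ))
    (A B : ℝ)
    (hA : A = Q (m+1) * c (m-2) *
      ((κ/2) * ((m:ℝ) + 2) * c m * c (m+2)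
        + (m:ℝ) * (((m:ℝ) + 1) * a m + b m) * c (m+2)
        - (2*(m:ℝ) + 3) * ((m:ℝ) + 3)^2 * (Q (m+2))^2 * c m))
    (hB : B = Q (m+1) * c (m-2) *
      (((m:ℝ) + 2) * (m:ℝ) * (((m:ℝ) + 1) * a m + b m) * c (m+2)
        - ((κ/2) * ((m:ℝ) + 2) * ((m:ℝ) + 1) + (m:ℝ) * (2*(m:ℝ) + 3)) * c m * c (m+2)
        + (2*(m:ℝ) + 3) * ((m:ℝ) + 3)^2 * ((m:ℝ) + 1) * (Q (m+2))^2 * c m)) :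
    B = -((m:ℝ) + 1) * A ∧
    (A ≠ 0 → ∀ w v : ℝ, (A * w + B * v = 0 ↔ w - ((m:ℝ) + 1) * v = 0)) := by
  have hQm : Q m = 0 := by
    rw [hQ m le_rfl]
    simp
  have ham := ha m le_rfl
  have hbm := hb m le_rfl
  have hcm := hc m
  have hcm2 := hc (m+2)
  have key : B = -((m:ℝ) + 1) * A := by
    subst hA hB
    rw [ham, hbm, hcm, hcm2, hQm]
    push_cast
    ring
  refine ⟨key, fun hAne w v => ?_⟩
  constructor
  · intro h
    have h2 : A * (w - ((m:ℝ) + 1) * v) = 0 := by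
      rw [key] at h; linarith
    rcases mul_eq_zero.1 h2 with h1 | h1
    · exact absurd h1 hAne
    · exact h1
  · intro h
    rw [key]
    linear_combination A * h
end

section
/- Let m ≥ 0 and l ≥ 1 be integers with l ≥ m, and let κ be a real number. With Q_l² = (l²−m²)/((2l−1)(2l+1)), a_l = κm/2 + (l+1)·Q_l² − l·Q_{l+1}², and c_l = κ·l(l+1)/2 − m, define A = (l−1)·Q_l²·( m − (κ/2)·l(l−1) )·c_{l+1} + ( l·(1 − Q_l² − Q_{l+1}²) + (κ/2)·m )·c_{l−1}·c_{l+1} − (l+2)·Q_{l+1}²·( 2m(l+1) + (κ/2)·l(l+2) )·c_{l−1} and B = (l−1)(l+1)·Q_l²·( m − (κ/2)·l(l−1) )·c_{l+1} − ( m² + l·a_l )·c_{l−1}·c_{l+1} + l(l+2)·Q_{l+1}²·( 2m(l+1) + (κ/2)·l(l+2) )·c_{l−1}. Then B = −l·A; consequently, the equation A·w + B·v = 0 is equivalent (when A ≠ 0) to w − l·v = 0. -/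
/-! The Legendre ratio `Q_l² = (l² − m²)/((2l − 1)(2l + 1))` enters `B + l·A` only through the
combination `(2l − 1)(2l + 1)·Q_l² − (l² − m²)`, which vanishes; `Q_{l+1}²` cancels outright.
So `B = −l·A` is a polynomial identity once the denominator of `Q_l²` is cleared; that
denominator never vanishes because `2l ± 1` is odd. -/

theorem two_mul_intCast_sub_one_mul_add_one_ne_zero (j : ℤ) :
    (2 * (j : ℝ) - 1) * (2 * (j : ℝ) + 1) ≠ 0 := by
  have hodd : (2 * j - 1) * (2 * j + 1) ≠ 0 := mul_ne_zero (by omega) (by omega)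
  exact_mod_cast hodd

theorem coeffB_eq_neg_mul_coeffA (l m κ Ql Ql₁ al cPrev cNext : ℝ)
    (hQl : Ql * ((2 * l - 1) * (2 * l + 1)) = l ^ 2 - m ^ 2)
    (hal : al = κ * m / 2 + (l + 1) * Ql - l * Ql₁)
    (hcPrev : cPrev = κ * (l - 1) * l / 2 - m) (hcNext : cNext = κ * (l + 1) * (l + 2) / 2 - m) :
    (l - 1) * (l + 1) * Ql * (m - κ / 2 * l * (l - 1)) * cNext
        - (m ^ 2 + l * al) * cPrev * cNext
        + l * (l + 2) * Ql₁ * (2 * m * (l + 1) + κ / 2 * l * (l + 2)) * cPrev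
      = -l * ((l - 1) * Ql * (m - κ / 2 * l * (l - 1)) * cNext
        + (l * (1 - Ql - Ql₁) + κ / 2 * m) * cPrev * cNext
        - (l + 2) * Ql₁ * (2 * m * (l + 1) + κ / 2 * l * (l + 2)) * cPrev) := by
  subst hal hcPrev hcNext
  linear_combination (-(κ * (l - 1) * l / 2 - m) * (κ * (l + 1) * (l + 2) / 2 - m)) * hQl

theorem stmt_11_general (m l : ℤ) (κ : ℝ)
    (Qsq a c : ℤ → ℝ)
    (hQ : ∀ j : ℤ, Qsq j = ((j:ℝ)^2 - (m:ℝ)^2) / ((2*(j:ℝ) - 1) * (2*(j:ℝ) + 1)))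
    (ha : ∀ j : ℤ, a j = κ * (m:ℝ) / 2 + ((j:ℝ) + 1) * Qsq j - (j:ℝ) * Qsq (j+1))
    (hc : ∀ j : ℤ, c j = κ * (j:ℝ) * ((j:ℝ) + 1) / 2 - (m:ℝ))
    (A B : ℝ)
    (hA : A = ((l:ℝ) - 1) * Qsq l * ((m:ℝ) - (κ/2) * (l:ℝ) * ((l:ℝ) - 1)) * c (l+1)
        + ((l:ℝ) * (1 - Qsq l - Qsq (l+1)) + (κ/2) * (m:ℝ)) * c (l-1) * c (l+1)
        - ((l:ℝ) + 2) * Qsq (l+1) *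
            (2 * (m:ℝ) * ((l:ℝ) + 1) + (κ/2) * (l:ℝ) * ((l:ℝ) + 2)) * c (l-1))
    (hB : B = ((l:ℝ) - 1) * ((l:ℝ) + 1) * Qsq l *
            ((m:ℝ) - (κ/2) * (l:ℝ) * ((l:ℝ) - 1)) * c (l+1)
        - ((m:ℝ)^2 + (l:ℝ) * a l) * c (l-1) * c (l+1)
        + (l:ℝ) * ((l:ℝ) + 2) * Qsq (l+1) *
            (2 * (m:ℝ) * ((l:ℝ) + 1) + (κ/2) * (l:ℝ) * ((l:ℝ) + 2)) * c (l-1)) :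
    B = -(l:ℝ) * A ∧
    (A ≠ 0 → ∀ w v : ℝ, (A * w + B * v = 0 ↔ w - (l:ℝ) * v = 0)) := by
  have hQl : Qsq l * ((2 * (l : ℝ) - 1) * (2 * (l : ℝ) + 1)) = (l : ℝ) ^ 2 - (m : ℝ) ^ 2 := by
    rw [hQ l]
    exact div_mul_cancel₀ _ (two_mul_intCast_sub_one_mul_add_one_ne_zero l)
  have hcPrev : c (l - 1) = κ * ((l : ℝ) - 1) * l / 2 - m := by rw [hc]; push_cast; ring
  have hcNext : c (l + 1) = κ * ((l : ℝ) + 1) * (l + 2) / 2 - m := by rw [hc]; push_cast; ring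
  have hBA : B = -(l : ℝ) * A := by
    rw [hA, hB]
    exact coeffB_eq_neg_mul_coeffA _ _ _ _ _ _ _ _ hQl (ha l) hcPrev hcNext
  refine ⟨hBA, fun hA₀ w v => ?_⟩
  rw [hBA, show A * w + -(l : ℝ) * A * v = A * (w - l * v) by ring, mul_eq_zero]
  exact or_iff_right hA₀

/-- The coefficients `A` (of `w_{j,0}`) and `B` (of `v_{j,0}`) in the
lowest-order recursion for polar-led hybrid modes satisfy `B = −l·A`; hence, when
`A ≠ 0`, the equation `A·w + B·v = 0` is equivalent to `w − l·v = 0`. -/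
theorem stmt_11 (m l : ℤ) (hm : 0 ≤ m) (hl : 1 ≤ l) (hlm : m ≤ l) (κ : ℝ)
    (Qsq a c : ℤ → ℝ)
    (hQ : ∀ j : ℤ, Qsq j = ((j:ℝ)^2 - (m:ℝ)^2) / ((2*(j:ℝ) - 1) * (2*(j:ℝ) + 1)))
    (ha : ∀ j : ℤ, a j = κ * (m:ℝ) / 2 + ((j:ℝ) + 1) * Qsq j - (j:ℝ) * Qsq (j+1))
    (hc : ∀ j : ℤ, c j = κ * (j:ℝ) * ((j:ℝ) + 1) / 2 - (m:ℝ))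
    (A B : ℝ)
    (hA : A = ((l:ℝ) - 1) * Qsq l * ((m:ℝ) - (κ/2) * (l:ℝ) * ((l:ℝ) - 1)) * c (l+1)
        + ((l:ℝ) * (1 - Qsq l - Qsq (l+1)) + (κ/2) * (m:ℝ)) * c (l-1) * c (l+1)
        - ((l:ℝ) + 2) * Qsq (l+1) *
            (2 * (m:ℝ) * ((l:ℝ) + 1) + (κ/2) * (l:ℝ) * ((l:ℝ) + 2)) * c (l-1))
    (hB : B = ((l:ℝ) - 1) * ((l:ℝ) + 1) * Qsq l *
            ((m:ℝ) - (κ/2) * (l:ℝ) * ((l:ℝ) - 1)) * c (l+1)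
        - ((m:ℝ)^2 + (l:ℝ) * a l) * c (l-1) * c (l+1)
        + (l:ℝ) * ((l:ℝ) + 2) * Qsq (l+1) *
            (2 * (m:ℝ) * ((l:ℝ) + 1) + (κ/2) * (l:ℝ) * ((l:ℝ) + 2)) * c (l-1)) :
    B = -(l:ℝ) * A ∧
    (A ≠ 0 → ∀ w v : ℝ, (A * w + B * v = 0 ↔ w - (l:ℝ) * v = 0)) :=
  stmt_11_general m l κ Qsq a c hQ ha hc A B hA hB
end
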